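/- arXiv:2004.07310 — 4 statements merged into one kernel-verified Lean document; each statement's English description precedes it below -/
import Mathlib

section
/- For measurable functions Z, Z̃ : Θ → (0,∞), the total variation distance between the doubly-intractable posteriors satisfies ‖π_Z − π_{Z̃}‖_tv ≤ 2 ‖Z/Z̃ − 1‖_{L¹(π_Z)}, i.e. ‖π_Z − π_{Z̃}‖_tv ≤ 2 ∫_Θ |Z(θ)/Z̃(θ) − 1| π_Z(dθ). -/
open MeasureTheory Real

noncomputable section

/-- Normalizing constant `C_Z = ∫ exp(-Φ)/Z dμ`. -/
def CZ {Θ : Type*} [MeasurableSpace Θ] (μ : Measure Θ) (Φ Z : Θ → ℝ) : ℝ :=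
  ∫ θ, Real.exp (-Φ θ) / Z θ ∂μ

/-- The doubly-intractable posterior `π_Z` with `μ`-density `exp(-Φ)/(Z C_Z)`. -/
def post {Θ : Type*} [MeasurableSpace Θ] (μ : Measure Θ) (Φ Z : Θ → ℝ) : Measure Θ :=
  (ENNReal.ofReal (CZ μ Φ Z))⁻¹ •
    μ.withDensity (fun θ => ENNReal.ofReal (Real.exp (-Φ θ) / Z θ))

/-- Total variation distance `sup_{|f|_∞ ≤ 1} |E_{ν₁} f - E_{ν₂} f|`. -/
def tvDist {Θ : Type*} [MeasurableSpace Θ] (ν₁ ν₂ : Measure Θ) : ℝ :=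
  ⨆ f : {f : Θ → ℝ // Measurable f ∧ ∀ θ, |f θ| ≤ 1},
    |(∫ θ, f.1 θ ∂ν₁) - ∫ θ, f.1 θ ∂ν₂|

lemma post_integral {Θ : Type*} [MeasurableSpace Θ] (μ : Measure Θ)
    (Φ Z : Θ → ℝ) (hΦ : Measurable Φ) (hZ : Measurable Z)
    (hpos : ∀ θ, 0 ≤ Real.exp (-Φ θ) / Z θ)
    (hC : 0 < CZ μ Φ Z) (g : Θ → ℝ) :
    ∫ θ, g θ ∂(post μ Φ Z)
      = (CZ μ Φ Z)⁻¹ * ∫ θ, (Real.exp (-Φ θ) / Z θ) * g θ ∂μ := by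
  have hmeas : Measurable fun θ => Real.toNNReal (Real.exp (-Φ θ) / Z θ) :=
    ((Real.measurable_exp.comp hΦ.neg).div hZ).real_toNNReal
  rw [post, integral_smul_measure]
  have h1 : (fun θ => ENNReal.ofReal (Real.exp (-Φ θ) / Z θ))
      = fun θ => ((Real.toNNReal (Real.exp (-Φ θ) / Z θ) : NNReal) : ENNReal) := rfl
  rw [h1, integral_withDensity_eq_integral_smul hmeas]
  have h2 : (fun θ => (Real.toNNReal (Real.exp (-Φ θ) / Z θ)) • g θ)
      = fun θ => (Real.exp (-Φ θ) / Z θ) * g θ := by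
    funext θ
    rw [NNReal.smul_def, smul_eq_mul, Real.coe_toNNReal _ (hpos θ)]
  rw [h2, ENNReal.toReal_inv, ENNReal.toReal_ofReal hC.le, smul_eq_mul]

theorem tv_stability {Θ : Type*} [MeasurableSpace Θ] (μ : Measure Θ) [SigmaFinite μ]
    (Φ Z Zt : Θ → ℝ) (hΦ : Measurable Φ) (hZ : Measurable Z) (hZt : Measurable Zt)
    (hZpos : ∀ θ, 0 < Z θ) (hZtpos : ∀ θ, 0 < Zt θ)
    (hint : Integrable (fun θ => Real.exp (-Φ θ) / Z θ) μ)
    (hintt : Integrable (fun θ => Real.exp (-Φ θ) / Zt θ) μ)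
    (hC : 0 < CZ μ Φ Z) (hCt : 0 < CZ μ Φ Zt) :
    tvDist (post μ Φ Z) (post μ Φ Zt) ≤
      2 * ∫ θ, |Z θ / Zt θ - 1| ∂(post μ Φ Z) := by
  have habsint : ∀ h : Θ → ℝ, |∫ θ, h θ ∂μ| ≤ ∫ θ, |h θ| ∂μ := fun h => by
    simpa [Real.norm_eq_abs] using norm_integral_le_integral_norm (μ := μ) h
  have hg1pos : ∀ θ, 0 ≤ Real.exp (-Φ θ) / Z θ :=
    fun θ => div_nonneg (Real.exp_nonneg _) (hZpos θ).le
  have hg2pos : ∀ θ, 0 ≤ Real.exp (-Φ θ) / Zt θ :=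
    fun θ => div_nonneg (Real.exp_nonneg _) (hZtpos θ).le
  set g1 : Θ → ℝ := fun θ => Real.exp (-Φ θ) / Z θ with hg1
  set g2 : Θ → ℝ := fun θ => Real.exp (-Φ θ) / Zt θ with hg2
  set C := CZ μ Φ Z with hCdef
  set Ct := CZ μ Φ Zt with hCtdef
  set I0 := ∫ θ, |g2 θ - g1 θ| ∂μ with hI0def
  have hdiffint : Integrable (fun θ => g2 θ - g1 θ) μ := hintt.sub hint
  have hI0int : Integrable (fun θ => |g2 θ - g1 θ|) μ := hdiffint.abs
  -- the RHS integral equals C⁻¹ * I0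
  have hRHS : ∫ θ, |Z θ / Zt θ - 1| ∂(post μ Φ Z) = C⁻¹ * I0 := by
    rw [post_integral μ Φ Z hΦ hZ hg1pos hC]
    congr 1
    refine integral_congr_ae (Filter.Eventually.of_forall fun θ => ?_)
    show Real.exp (-Φ θ) / Z θ * |Z θ / Zt θ - 1|
        = |Real.exp (-Φ θ) / Zt θ - Real.exp (-Φ θ) / Z θ|
    have h0 : Z θ ≠ 0 := (hZpos θ).ne'
    have h0t : Zt θ ≠ 0 := (hZtpos θ).ne'
    have he : Real.exp (-Φ θ) / Zt θ - Real.exp (-Φ θ) / Z θ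
        = (Real.exp (-Φ θ) / Z θ) * (Z θ / Zt θ - 1) := by
      field_simp
    rw [he, abs_mul, abs_of_nonneg (hg1pos θ)]
  rw [hRHS]
  have hne : Nonempty {f : Θ → ℝ // Measurable f ∧ ∀ θ, |f θ| ≤ 1} :=
    ⟨⟨0, measurable_const, fun θ => by simp⟩⟩
  refine ciSup_le fun f => ?_
  obtain ⟨f, hfm, hfb⟩ := f
  simp only
  have hfsm : AEStronglyMeasurable f μ := hfm.aestronglyMeasurable
  have hfbdd : ∃ c : ℝ, ∀ x, ‖f x‖ ≤ c := ⟨1, fun x => by simpa using hfb x⟩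
  have hif1 : Integrable (fun θ => g1 θ * f θ) μ := by
    have := hint.bdd_mul hfsm (Filter.Eventually.of_forall hfbdd.choose_spec)
    refine this.congr (Filter.Eventually.of_forall fun θ => mul_comm _ _)
  have hif2 : Integrable (fun θ => g2 θ * f θ) μ := by
    have := hintt.bdd_mul hfsm (Filter.Eventually.of_forall hfbdd.choose_spec)
    refine this.congr (Filter.Eventually.of_forall fun θ => mul_comm _ _)
  rw [post_integral μ Φ Z hΦ hZ hg1pos hC, post_integral μ Φ Zt hΦ hZt hg2pos hCt]
  set S1 := ∫ θ, g1 θ * f θ ∂μ with hS1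
  set S2 := ∫ θ, g2 θ * f θ ∂μ with hS2
  -- |S1 - S2| ≤ I0
  have h1 : |S1 - S2| ≤ I0 := by
    rw [hS1, hS2, ← integral_sub hif1 hif2]
    calc |∫ θ, (g1 θ * f θ - g2 θ * f θ) ∂μ| ≤ ∫ θ, |g1 θ * f θ - g2 θ * f θ| ∂μ :=
          habsint _
      _ ≤ I0 := by
          refine integral_mono ((hif1.sub hif2).abs) hI0int fun θ => ?_
          have : g1 θ * f θ - g2 θ * f θ = (g1 θ - g2 θ) * f θ := by ring
          rw [this, abs_mul, abs_sub_comm (g2 θ) (g1 θ)]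
          calc |g1 θ - g2 θ| * |f θ| ≤ |g1 θ - g2 θ| * 1 := by
                exact mul_le_mul_of_nonneg_left (hfb θ) (abs_nonneg _)
            _ = |g1 θ - g2 θ| := mul_one _
  -- |S2| ≤ Ct
  have h2 : |S2| ≤ Ct := by
    have : Ct = ∫ θ, g2 θ ∂μ := rfl
    rw [this]
    calc |S2| ≤ ∫ θ, |g2 θ * f θ| ∂μ := habsint _
      _ ≤ ∫ θ, g2 θ ∂μ := by
          refine integral_mono hif2.abs hintt fun θ => ?_
          rw [abs_mul, abs_of_nonneg (hg2pos θ)]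
          calc g2 θ * |f θ| ≤ g2 θ * 1 := mul_le_mul_of_nonneg_left (hfb θ) (hg2pos θ)
            _ = g2 θ := mul_one _
  -- |Ct - C| ≤ I0
  have h3 : |Ct - C| ≤ I0 := by
    have hCC : Ct - C = ∫ θ, (g2 θ - g1 θ) ∂μ := (integral_sub hintt hint).symm
    rw [hCC]
    exact habsint _
  have hI0nonneg : 0 ≤ I0 := integral_nonneg fun θ => abs_nonneg _
  -- final arithmetic
  have habs : |C⁻¹ * S1 - Ct⁻¹ * S2| ≤ C⁻¹ * |S1 - S2| + |C⁻¹ - Ct⁻¹| * |S2| := by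
    have heq : C⁻¹ * S1 - Ct⁻¹ * S2 = C⁻¹ * (S1 - S2) + (C⁻¹ - Ct⁻¹) * S2 := by ring
    rw [heq]
    refine (abs_add_le _ _).trans_eq ?_
    rw [abs_mul, abs_mul, abs_of_pos (inv_pos.mpr hC)]
  have hfrac : |C⁻¹ - Ct⁻¹| = |Ct - C| / (C * Ct) := by
    have : C⁻¹ - Ct⁻¹ = (Ct - C) / (C * Ct) := by field_simp
    rw [this, abs_div, abs_of_pos (mul_pos hC hCt)]
  calc |C⁻¹ * S1 - Ct⁻¹ * S2| ≤ C⁻¹ * |S1 - S2| + |C⁻¹ - Ct⁻¹| * |S2| := habs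
    _ = C⁻¹ * |S1 - S2| + (|Ct - C| / (C * Ct)) * |S2| := by rw [hfrac]
    _ ≤ C⁻¹ * I0 + (I0 / (C * Ct)) * Ct := by
        gcongr
    _ = 2 * (C⁻¹ * I0) := by
        field_simp
        ring
end
end

section
/- Because π_{Z̃} = π_{c̃ Z̃} for every constant c̃ > 0, the total variation bound improves to ‖π_Z − π_{Z̃}‖_tv ≤ 2 inf_{c̃ > 0} ‖Z/(c̃ Z̃) − 1‖_{L¹(π_Z)}. In particular, if Z̃ = c Z for some c > 0 then π_Z = π_{Z̃}. -/
open MeasureTheory Real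

noncomputable section

lemma integral_post {Θ : Type*} [MeasurableSpace Θ] (μ : Measure Θ) (Φ Z : Θ → ℝ)
    (hΦ : Measurable Φ) (hZ : Measurable Z) (hZpos : ∀ θ, 0 < Z θ)
    (hCnn : 0 ≤ CZ μ Φ Z) (g : Θ → ℝ) :
    ∫ θ, g θ ∂(post μ Φ Z) =
      (CZ μ Φ Z)⁻¹ * ∫ θ, g θ * (Real.exp (-Φ θ) / Z θ) ∂μ := by
  have hw : Measurable fun θ => Real.exp (-Φ θ) / Z θ := (hΦ.neg.exp).div hZ
  have hwnn : ∀ θ, 0 ≤ Real.exp (-Φ θ) / Z θ := fun θ =>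
    le_of_lt (div_pos (Real.exp_pos _) (hZpos θ))
  rw [post, integral_smul_measure]
  have h1 : ∫ θ, g θ ∂(μ.withDensity (fun θ => ENNReal.ofReal (Real.exp (-Φ θ) / Z θ)))
      = ∫ θ, g θ * (Real.exp (-Φ θ) / Z θ) ∂μ := by
    simp only [ENNReal.ofReal]
    rw [integral_withDensity_eq_integral_smul hw.real_toNNReal]
    congr 1
    ext θ
    simp [NNReal.smul_def, Real.coe_toNNReal _ (hwnn θ), mul_comm]
  rw [h1, ENNReal.toReal_inv, ENNReal.toReal_ofReal hCnn, smul_eq_mul]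

lemma abs_int_le {Θ : Type*} [MeasurableSpace Θ] {μ : Measure Θ} (g : Θ → ℝ) :
    |∫ θ, g θ ∂μ| ≤ ∫ θ, |g θ| ∂μ := by
  simpa [Real.norm_eq_abs] using norm_integral_le_integral_norm (μ := μ) g

lemma key {Θ : Type*} [MeasurableSpace Θ] (μ : Measure Θ)
    (w wt : Θ → ℝ) (hwm : Measurable w) (hwtm : Measurable wt)
    (hw : Integrable w μ) (hwt : Integrable wt μ)
    (hwtnn : ∀ θ, 0 ≤ wt θ)
    (f : Θ → ℝ) (hf : Measurable f) (hf1 : ∀ θ, |f θ| ≤ 1)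
    (hCtpos : 0 < ∫ θ, wt θ ∂μ)
    (hCpos : 0 < ∫ θ, w θ ∂μ) (c : ℝ) (hc : 0 < c) :
    |(∫ θ, w θ ∂μ)⁻¹ * ∫ θ, f θ * w θ ∂μ -
      (∫ θ, wt θ ∂μ)⁻¹ * ∫ θ, f θ * wt θ ∂μ|
    ≤ 2 * ((∫ θ, w θ ∂μ)⁻¹ * ∫ θ, |wt θ / c - w θ| ∂μ) := by
  set C := ∫ θ, w θ ∂μ with hCdef
  set Ct := ∫ θ, wt θ ∂μ with hCtdef
  set A := ∫ θ, f θ * w θ ∂μ with hA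
  set B := ∫ θ, f θ * wt θ ∂μ with hB
  set E := ∫ θ, |wt θ / c - w θ| ∂μ with hE
  have hEnn : 0 ≤ E := integral_nonneg fun θ => abs_nonneg _
  have hfw : Integrable (fun θ => f θ * w θ) μ := by
    refine hw.mono (hf.mul hwm).aestronglyMeasurable ?_
    filter_upwards with θ
    rw [Real.norm_eq_abs, Real.norm_eq_abs, abs_mul]
    calc |f θ| * |w θ| ≤ 1 * |w θ| :=
          mul_le_mul_of_nonneg_right (hf1 θ) (abs_nonneg _)
      _ = |w θ| := one_mul _
  have hfwt : Integrable (fun θ => f θ * wt θ) μ := by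
    refine hwt.mono (hf.mul hwtm).aestronglyMeasurable ?_
    filter_upwards with θ
    rw [Real.norm_eq_abs, Real.norm_eq_abs, abs_mul]
    calc |f θ| * |wt θ| ≤ 1 * |wt θ| :=
          mul_le_mul_of_nonneg_right (hf1 θ) (abs_nonneg _)
      _ = |wt θ| := one_mul _
  have hsub : Integrable (fun θ => wt θ / c - w θ) μ := (hwt.div_const c).sub hw
  have hint_sub : ∫ θ, (wt θ / c - w θ) ∂μ = Ct / c - C := by
    rw [integral_sub (hwt.div_const c) hw, integral_div]
  have h1 : |A - B / c| ≤ E := by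
    have heq : A - B / c = ∫ θ, f θ * (w θ - wt θ / c) ∂μ := by
      rw [hA, hB]
      rw [show (fun θ => f θ * (w θ - wt θ / c)) =
        (fun θ => f θ * w θ - (f θ * wt θ) / c) by ext θ; ring]
      rw [integral_sub hfw (hfwt.div_const c), integral_div]
    rw [heq]
    have hint2 : Integrable (fun θ => f θ * (w θ - wt θ / c)) μ := by
      refine ((hfw.sub (hfwt.div_const c)).congr ?_)
      filter_upwards with θ; simp only [Pi.sub_apply]; ring
    calc |∫ θ, f θ * (w θ - wt θ / c) ∂μ| ≤ ∫ θ, |f θ * (w θ - wt θ / c)| ∂μ :=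
          abs_int_le _
      _ ≤ ∫ θ, |wt θ / c - w θ| ∂μ := by
          apply integral_mono hint2.abs hsub.abs
          intro θ
          show |f θ * (w θ - wt θ / c)| ≤ |wt θ / c - w θ|
          rw [abs_mul, abs_sub_comm]
          calc |f θ| * |wt θ / c - w θ| ≤ 1 * |wt θ / c - w θ| :=
                mul_le_mul_of_nonneg_right (hf1 θ) (abs_nonneg _)
            _ = _ := one_mul _
  have h2 : |Ct / c - C| ≤ E := by
    rw [← hint_sub]; exact abs_int_le _
  have h3 : |B| ≤ Ct := by
    calc |B| ≤ ∫ θ, |f θ * wt θ| ∂μ := abs_int_le _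
      _ ≤ ∫ θ, wt θ ∂μ := by
          apply integral_mono hfwt.abs hwt
          intro θ
          show |f θ * wt θ| ≤ wt θ
          rw [abs_mul, abs_of_nonneg (hwtnn θ)]
          calc |f θ| * wt θ ≤ 1 * wt θ :=
                mul_le_mul_of_nonneg_right (hf1 θ) (hwtnn θ)
            _ = _ := one_mul _
  have key_eq : C⁻¹ * A - Ct⁻¹ * B =
      C⁻¹ * (A - B / c) + (Ct⁻¹ * C⁻¹ * (Ct / c - C)) * B := by
    field_simp
    ring
  rw [key_eq]
  calc |C⁻¹ * (A - B / c) + (Ct⁻¹ * C⁻¹ * (Ct / c - C)) * B|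
      ≤ |C⁻¹ * (A - B / c)| + |(Ct⁻¹ * C⁻¹ * (Ct / c - C)) * B| := abs_add_le _ _
    _ ≤ C⁻¹ * E + Ct⁻¹ * C⁻¹ * E * Ct := by
        gcongr
        · rw [abs_mul, abs_of_nonneg (inv_nonneg.mpr hCpos.le)]
          exact mul_le_mul_of_nonneg_left h1 (inv_nonneg.mpr hCpos.le)
        · rw [abs_mul, abs_mul, abs_mul,
            abs_of_nonneg (inv_nonneg.mpr hCtpos.le),
            abs_of_nonneg (inv_nonneg.mpr hCpos.le)]
          have := mul_le_mul (mul_le_mul_of_nonneg_left h2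
            (by positivity : (0:ℝ) ≤ Ct⁻¹ * C⁻¹)) h3 (abs_nonneg _) (by positivity)
          linarith [this]
    _ = 2 * (C⁻¹ * E) := by
        field_simp
        ring

lemma post_scaling {Θ : Type*} [MeasurableSpace Θ] (μ : Measure Θ) (Φ Zt : Θ → ℝ)
    (hΦ : Measurable Φ) (hZt : Measurable Zt)
    (c : ℝ) (hc : 0 < c) :
    post μ Φ (fun θ => c * Zt θ) = post μ Φ Zt := by
  have hCZ : CZ μ Φ (fun θ => c * Zt θ) = c⁻¹ * CZ μ Φ Zt := by
    rw [CZ, CZ, ← integral_const_mul]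
    congr 1; ext θ
    field_simp
  have hwm : Measurable fun θ => ENNReal.ofReal (Real.exp (-Φ θ) / Zt θ) :=
    ((hΦ.neg.exp).div hZt).ennreal_ofReal
  have hdens : (fun θ => ENNReal.ofReal (Real.exp (-Φ θ) / (c * Zt θ)))
      = (ENNReal.ofReal c⁻¹) • fun θ => ENNReal.ofReal (Real.exp (-Φ θ) / Zt θ) := by
    ext θ
    rw [Pi.smul_apply, smul_eq_mul, ← ENNReal.ofReal_mul (by positivity)]
    congr 1
    field_simp
  rw [post, post, hCZ, hdens, withDensity_smul _ hwm,
    ENNReal.ofReal_mul (by positivity), ENNReal.mul_inv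
      (Or.inl (ne_of_gt (ENNReal.ofReal_pos.mpr (inv_pos.mpr hc)))) (Or.inl ENNReal.ofReal_ne_top),
    smul_smul, mul_assoc, mul_comm _ (ENNReal.ofReal c⁻¹), ← mul_assoc,
    ENNReal.inv_mul_cancel (ne_of_gt (ENNReal.ofReal_pos.mpr (inv_pos.mpr hc))) ENNReal.ofReal_ne_top, one_mul]

theorem tv_stability_scaling {Θ : Type*} [MeasurableSpace Θ] (μ : Measure Θ) [SigmaFinite μ]
    (Φ Z Zt : Θ → ℝ) (hΦ : Measurable Φ) (hZ : Measurable Z) (hZt : Measurable Zt)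
    (hZpos : ∀ θ, 0 < Z θ) (hZtpos : ∀ θ, 0 < Zt θ)
    (hint : Integrable (fun θ => Real.exp (-Φ θ) / Z θ) μ)
    (hintt : Integrable (fun θ => Real.exp (-Φ θ) / Zt θ) μ)
    (hC : 0 < CZ μ Φ Z) (hCt : 0 < CZ μ Φ Zt) :
    (∀ c : ℝ, 0 < c → post μ Φ (fun θ => c * Zt θ) = post μ Φ Zt) ∧
    tvDist (post μ Φ Z) (post μ Φ Zt) ≤
      2 * ⨅ c : {c : ℝ // 0 < c}, ∫ θ, |Z θ / (c.1 * Zt θ) - 1| ∂(post μ Φ Z) := by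
  constructor
  · exact fun c hc => post_scaling μ Φ Zt hΦ hZt c hc
  set w : Θ → ℝ := fun θ => Real.exp (-Φ θ) / Z θ with hwdef
  set wt : Θ → ℝ := fun θ => Real.exp (-Φ θ) / Zt θ with hwtdef
  have hwm : Measurable w := (hΦ.neg.exp).div hZ
  have hwtm : Measurable wt := (hΦ.neg.exp).div hZt
  have hwtnn : ∀ θ, 0 ≤ wt θ := fun θ =>
    le_of_lt (div_pos (Real.exp_pos _) (hZtpos θ))
  -- the integrand identity : |Z/(c Zt) - 1| * w = |wt/c - w|
  have hpoint : ∀ (c : ℝ), 0 < c → ∀ θ,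
      |Z θ / (c * Zt θ) - 1| * w θ = |wt θ / c - w θ| := by
    intro c hc θ
    have hwpos : 0 < w θ := div_pos (Real.exp_pos _) (hZpos θ)
    have hZne := (hZpos θ).ne'
    have hZtne := (hZtpos θ).ne'
    have hmul : (Z θ / (c * Zt θ) - 1) * w θ = wt θ / c - w θ := by
      simp only [hwdef, hwtdef]
      field_simp
    calc |Z θ / (c * Zt θ) - 1| * w θ
        = |Z θ / (c * Zt θ) - 1| * |w θ| := by rw [abs_of_pos hwpos]
      _ = |(Z θ / (c * Zt θ) - 1) * w θ| := (abs_mul _ _).symm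
      _ = |wt θ / c - w θ| := by rw [hmul]
  -- value of the infimum integrand
  have hIc : ∀ (c : ℝ), 0 < c →
      ∫ θ, |Z θ / (c * Zt θ) - 1| ∂(post μ Φ Z) =
        (CZ μ Φ Z)⁻¹ * ∫ θ, |wt θ / c - w θ| ∂μ := by
    intro c hc
    rw [integral_post μ Φ Z hΦ hZ hZpos hC.le]
    congr 1
    apply integral_congr_ae
    filter_upwards with θ
    exact hpoint c hc θ
  -- each infimum term is nonneg
  have hInn : ∀ c : {c : ℝ // 0 < c},
      0 ≤ ∫ θ, |Z θ / (c.1 * Zt θ) - 1| ∂(post μ Φ Z) := fun c =>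
    integral_nonneg fun θ => abs_nonneg _
  have hiInf_nn : 0 ≤ ⨅ c : {c : ℝ // 0 < c},
      ∫ θ, |Z θ / (c.1 * Zt θ) - 1| ∂(post μ Φ Z) :=
    Real.iInf_nonneg hInn
  rw [tvDist]
  apply Real.iSup_le _ (by linarith)
  rintro ⟨f, hfm, hf1⟩
  -- per-c bound
  have hperc : ∀ c : {c : ℝ // 0 < c},
      |(∫ θ, f θ ∂(post μ Φ Z)) - ∫ θ, f θ ∂(post μ Φ Zt)| ≤
        2 * ∫ θ, |Z θ / (c.1 * Zt θ) - 1| ∂(post μ Φ Z) := by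
    rintro ⟨c, hc⟩
    rw [integral_post μ Φ Z hΦ hZ hZpos hC.le,
      integral_post μ Φ Zt hΦ hZt hZtpos hCt.le, hIc c hc]
    exact key μ w wt hwm hwtm hint hintt hwtnn f hfm hf1 hCt hC c hc
  have hhalf : |(∫ θ, f θ ∂(post μ Φ Z)) - ∫ θ, f θ ∂(post μ Φ Zt)| / 2 ≤
      ⨅ c : {c : ℝ // 0 < c}, ∫ θ, |Z θ / (c.1 * Zt θ) - 1| ∂(post μ Φ Z) := by
    haveI : Nonempty {c : ℝ // 0 < c} := ⟨⟨1, one_pos⟩⟩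
    apply le_ciInf
    intro c
    linarith [hperc c]
  linarith
end
end

section
/- Let Z̃ : Ω × Θ → (0,∞) be a jointly measurable random function on a probability space (Ω, F, P). Then the expected total variation distance satisfies E‖π_Z − π_{Z̃(·)}‖_tv ≤ 2 ∫_Θ E|Z(θ)/Z̃(·,θ) − 1| π_Z(dθ) ≤ 2 ∫_Θ (E|Z̃(·,θ)/Z(θ) − 1|²)^{1/2} (E[Z(θ)/Z̃(·,θ)]²)^{1/2} π_Z(dθ). -/
open MeasureTheory Real

noncomputable section

open scoped NNReal ENNReal

lemma integral_post_eq {Θ : Type*} [MeasurableSpace Θ] (μ : Measure Θ) (Φ Z : Θ → ℝ)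
    (hΦ : Measurable Φ) (hZ : Measurable Z) (hZpos : ∀ θ, 0 < Z θ) (hC : 0 < CZ μ Φ Z)
    (g : Θ → ℝ) :
    ∫ θ, g θ ∂(post μ Φ Z) = (CZ μ Φ Z)⁻¹ * ∫ θ, g θ * (Real.exp (-Φ θ) / Z θ) ∂μ := by
  have hp : Measurable fun θ => Real.exp (-Φ θ) / Z θ :=
    (Real.measurable_exp.comp hΦ.neg).div hZ
  have hpnn : ∀ θ, 0 ≤ Real.exp (-Φ θ) / Z θ := fun θ =>
    div_nonneg (Real.exp_nonneg _) (hZpos θ).le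
  rw [post, integral_smul_measure,
    show (fun θ => ENNReal.ofReal (Real.exp (-Φ θ) / Z θ)) =
      (fun θ => ((Real.toNNReal (Real.exp (-Φ θ) / Z θ) : ℝ≥0) : ℝ≥0∞)) from rfl,
    integral_withDensity_eq_integral_smul hp.real_toNNReal]
  rw [ENNReal.toReal_inv, ENNReal.toReal_ofReal hC.le, smul_eq_mul]
  congr 1
  refine integral_congr_ae (Filter.Eventually.of_forall fun θ => ?_)
  simp [NNReal.smul_def, Real.coe_toNNReal _ (hpnn θ), mul_comm]

lemma post_isProb {Θ : Type*} [MeasurableSpace Θ] (μ : Measure Θ) (Φ Z : Θ → ℝ)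
    (hZpos : ∀ θ, 0 < Z θ)
    (hint : Integrable (fun θ => Real.exp (-Φ θ) / Z θ) μ) (hC : 0 < CZ μ Φ Z) :
    IsProbabilityMeasure (post μ Φ Z) := by
  have hpnn : ∀ θ, 0 ≤ Real.exp (-Φ θ) / Z θ := fun θ =>
    div_nonneg (Real.exp_nonneg _) (hZpos θ).le
  constructor
  rw [post, Measure.smul_apply, withDensity_apply _ MeasurableSet.univ,
    Measure.restrict_univ, ← ofReal_integral_eq_lintegral_ofReal hint
      (Filter.Eventually.of_forall hpnn)]
  rw [smul_eq_mul, ← CZ]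
  exact ENNReal.inv_mul_cancel (by simpa [ENNReal.ofReal_eq_zero] using hC)
    ENNReal.ofReal_ne_top

lemma tv_det {Θ : Type*} [MeasurableSpace Θ] (μ : Measure Θ) (Φ Z W : Θ → ℝ)
    (hΦ : Measurable Φ) (hZ : Measurable Z) (hW : Measurable W)
    (hZpos : ∀ θ, 0 < Z θ) (hWpos : ∀ θ, 0 < W θ)
    (hint : Integrable (fun θ => Real.exp (-Φ θ) / Z θ) μ)
    (hintt : Integrable (fun θ => Real.exp (-Φ θ) / W θ) μ)
    (hC : 0 < CZ μ Φ Z) (hCt : 0 < CZ μ Φ W) :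
    tvDist (post μ Φ Z) (post μ Φ W) ≤ 2 * ∫ θ, |Z θ / W θ - 1| ∂(post μ Φ Z) := by
  set p : Θ → ℝ := fun θ => Real.exp (-Φ θ) / Z θ with hp_def
  set q : Θ → ℝ := fun θ => Real.exp (-Φ θ) / W θ with hq_def
  set r : Θ → ℝ := fun θ => Z θ / W θ with hr_def
  set C := CZ μ Φ Z
  set Ct := CZ μ Φ W
  have hp : Measurable p := (Real.measurable_exp.comp hΦ.neg).div hZ
  have hq : Measurable q := (Real.measurable_exp.comp hΦ.neg).div hW
  have hr : Measurable r := hZ.div hW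
  have hpnn : ∀ θ, 0 ≤ p θ := fun θ => div_nonneg (Real.exp_nonneg _) (hZpos θ).le
  have hqnn : ∀ θ, 0 ≤ q θ := fun θ => div_nonneg (Real.exp_nonneg _) (hWpos θ).le
  have hrp : ∀ θ, r θ * p θ = q θ := fun θ => by
    have h1 : Z θ ≠ 0 := (hZpos θ).ne'
    have h2 : W θ ≠ 0 := (hWpos θ).ne'
    simp only [hr_def, hp_def, hq_def]
    rw [div_mul_div_comm, mul_comm (Z θ), mul_div_mul_right _ _ h1]
  -- the key μ-integral: ∫ |r-1| p dμ
  have habs_eq : ∀ θ, |r θ - 1| * p θ = |q θ - p θ| := fun θ => by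
    rw [← abs_of_nonneg (hpnn θ), ← abs_mul, sub_mul, one_mul, hrp θ,
      abs_of_nonneg (hpnn θ)]
  have hqp_int : Integrable (fun θ => q θ - p θ) μ := hintt.sub hint
  have habs_int : Integrable (fun θ => |r θ - 1| * p θ) μ :=
    hqp_int.abs.congr (Filter.Eventually.of_forall fun θ => (habs_eq θ).symm)
  have hCtC : Ct - C = ∫ θ, (q θ - p θ) ∂μ := by
    rw [integral_sub hintt hint]; rfl
  have hRHS : 2 * ∫ θ, |Z θ / W θ - 1| ∂(post μ Φ Z)
      = 2 * (C⁻¹ * ∫ θ, |r θ - 1| * p θ ∂μ) := by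
    rw [integral_post_eq μ Φ Z hΦ hZ hZpos hC]
  rw [hRHS]
  have hIR : 0 ≤ ∫ θ, |r θ - 1| * p θ ∂μ :=
    integral_nonneg fun θ => mul_nonneg (abs_nonneg _) (hpnn θ)
  refine Real.iSup_le (fun f => ?_)
    (by positivity)
  obtain ⟨f, hfm, hfb⟩ := f
  simp only
  rw [integral_post_eq μ Φ Z hΦ hZ hZpos hC, integral_post_eq μ Φ W hΦ hW hWpos hCt]
  have hfp_int : Integrable (fun θ => f θ * p θ) μ := by
    refine hint.mono' (hfm.mul hp).aestronglyMeasurable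
      (Filter.Eventually.of_forall fun θ => ?_)
    rw [norm_mul, Real.norm_of_nonneg (hpnn θ)]
    calc ‖f θ‖ * p θ ≤ 1 * p θ :=
          mul_le_mul_of_nonneg_right (by simpa [Real.norm_eq_abs] using hfb θ) (hpnn θ)
      _ = p θ := one_mul _
  have hfq_int : Integrable (fun θ => f θ * q θ) μ := by
    refine hintt.mono' (hfm.mul hq).aestronglyMeasurable
      (Filter.Eventually.of_forall fun θ => ?_)
    rw [norm_mul, Real.norm_of_nonneg (hqnn θ)]
    calc ‖f θ‖ * q θ ≤ 1 * q θ :=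
          mul_le_mul_of_nonneg_right (by simpa [Real.norm_eq_abs] using hfb θ) (hqnn θ)
      _ = q θ := one_mul _
  have hcomb_int : Integrable (fun θ => C⁻¹ * (f θ * p θ) - Ct⁻¹ * (f θ * q θ)) μ :=
    (hfp_int.const_mul _).sub (hfq_int.const_mul _)
  have hd_int : Integrable (fun θ => C⁻¹ * p θ - Ct⁻¹ * q θ) μ :=
    (hint.const_mul _).sub (hintt.const_mul _)
  have step1 : C⁻¹ * (∫ θ, f θ * p θ ∂μ) - Ct⁻¹ * (∫ θ, f θ * q θ ∂μ)
      = ∫ θ, (C⁻¹ * (f θ * p θ) - Ct⁻¹ * (f θ * q θ)) ∂μ := by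
    rw [integral_sub (hfp_int.const_mul _) (hfq_int.const_mul _),
      integral_const_mul, integral_const_mul]
  rw [step1]
  calc |∫ θ, (C⁻¹ * (f θ * p θ) - Ct⁻¹ * (f θ * q θ)) ∂μ|
      ≤ ∫ θ, |C⁻¹ * (f θ * p θ) - Ct⁻¹ * (f θ * q θ)| ∂μ := by
        simpa [Real.norm_eq_abs] using
          norm_integral_le_integral_norm fun θ => C⁻¹ * (f θ * p θ) - Ct⁻¹ * (f θ * q θ)
    _ ≤ ∫ θ, |C⁻¹ * p θ - Ct⁻¹ * q θ| ∂μ := by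
        refine integral_mono hcomb_int.abs hd_int.abs fun θ => ?_
        have : C⁻¹ * (f θ * p θ) - Ct⁻¹ * (f θ * q θ)
            = f θ * (C⁻¹ * p θ - Ct⁻¹ * q θ) := by ring
        rw [this, abs_mul]
        calc |f θ| * |C⁻¹ * p θ - Ct⁻¹ * q θ|
            ≤ 1 * |C⁻¹ * p θ - Ct⁻¹ * q θ| :=
              mul_le_mul_of_nonneg_right (hfb θ) (abs_nonneg _)
          _ = _ := one_mul _
    _ ≤ ∫ θ, (C⁻¹ * (|r θ - 1| * p θ) + |C⁻¹ - Ct⁻¹| * q θ) ∂μ := by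
        refine integral_mono hd_int.abs
          ((habs_int.const_mul _).add (hintt.const_mul _)) fun θ => ?_
        have hdec : C⁻¹ * p θ - Ct⁻¹ * q θ
            = C⁻¹ * ((1 - r θ) * p θ) + (C⁻¹ - Ct⁻¹) * q θ := by
          rw [← hrp θ]; ring
        rw [hdec]
        refine (abs_add_le _ _).trans ?_
        gcongr
        · rw [abs_mul, abs_mul, abs_of_nonneg (by positivity : (0:ℝ) ≤ C⁻¹),
            abs_of_nonneg (hpnn θ), abs_sub_comm]
        · rw [abs_mul, abs_of_nonneg (hqnn θ)]
    _ = C⁻¹ * (∫ θ, |r θ - 1| * p θ ∂μ) + |C⁻¹ - Ct⁻¹| * Ct := by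
        rw [integral_add (habs_int.const_mul _) (hintt.const_mul _),
          integral_const_mul, integral_const_mul]; rfl
    _ ≤ C⁻¹ * (∫ θ, |r θ - 1| * p θ ∂μ) + C⁻¹ * (∫ θ, |r θ - 1| * p θ ∂μ) := by
        gcongr _ + ?_
        have h1 : |C⁻¹ - Ct⁻¹| * Ct = C⁻¹ * |Ct - C| := by
          have e : C⁻¹ - Ct⁻¹ = (Ct - C) / (C * Ct) := by field_simp
          rw [e, abs_div, abs_of_pos (by positivity : (0:ℝ) < C * Ct)]
          rw [div_mul_eq_mul_div, mul_div_assoc]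
          rw [show Ct / (C * Ct) = C⁻¹ by field_simp]
          ring
        rw [h1]
        gcongr
        rw [hCtC]
        calc |∫ θ, (q θ - p θ) ∂μ| ≤ ∫ θ, |q θ - p θ| ∂μ := by
              simpa [Real.norm_eq_abs] using
                norm_integral_le_integral_norm fun θ => q θ - p θ
          _ = ∫ θ, |r θ - 1| * p θ ∂μ :=
            integral_congr_ae (Filter.Eventually.of_forall fun θ => (habs_eq θ).symm)
    _ = 2 * (C⁻¹ * ∫ θ, |r θ - 1| * p θ ∂μ) := by ring

theorem expected_tv_stability {Θ : Type*} [MeasurableSpace Θ] (μ : Measure Θ) [SigmaFinite μ]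
    {Ω : Type*} [MeasurableSpace Ω] (P : Measure Ω) [IsProbabilityMeasure P]
    (Φ Z : Θ → ℝ) (Zt : Ω → Θ → ℝ)
    (hΦ : Measurable Φ) (hZ : Measurable Z)
    (hZt : Measurable (fun p : Ω × Θ => Zt p.1 p.2))
    (hZpos : ∀ θ, 0 < Z θ) (hZtpos : ∀ ω θ, 0 < Zt ω θ)
    (hint : Integrable (fun θ => Real.exp (-Φ θ) / Z θ) μ)
    (hintt : ∀ ω, Integrable (fun θ => Real.exp (-Φ θ) / Zt ω θ) μ)
    (hC : 0 < CZ μ Φ Z) (hCt : ∀ ω, 0 < CZ μ Φ (Zt ω))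
    (hL2a : ∀ θ, Integrable (fun ω => (Zt ω θ / Z θ - 1) ^ 2) P)
    (hL2b : ∀ θ, Integrable (fun ω => (Z θ / Zt ω θ) ^ 2) P)
    (hL1 : ∀ θ, Integrable (fun ω => |Z θ / Zt ω θ - 1|) P)
    (hintθ : Integrable (fun θ => ∫ ω, |Z θ / Zt ω θ - 1| ∂P) (post μ Φ Z))
    (hintθ2 : Integrable (fun θ =>
      Real.sqrt (∫ ω, (Zt ω θ / Z θ - 1) ^ 2 ∂P) *
        Real.sqrt (∫ ω, (Z θ / Zt ω θ) ^ 2 ∂P)) (post μ Φ Z)) :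
    (∫ ω, tvDist (post μ Φ Z) (post μ Φ (Zt ω)) ∂P ≤
        2 * ∫ θ, (∫ ω, |Z θ / Zt ω θ - 1| ∂P) ∂(post μ Φ Z)) ∧
      2 * (∫ θ, (∫ ω, |Z θ / Zt ω θ - 1| ∂P) ∂(post μ Φ Z)) ≤
        2 * ∫ θ, Real.sqrt (∫ ω, (Zt ω θ / Z θ - 1) ^ 2 ∂P) *
          Real.sqrt (∫ ω, (Z θ / Zt ω θ) ^ 2 ∂P) ∂(post μ Φ Z) := by
  haveI : IsProbabilityMeasure (post μ Φ Z) := post_isProb μ Φ Z hZpos hint hC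
  constructor
  · -- Part 1
    have hF_meas : Measurable fun z : Θ × Ω => |Z z.1 / Zt z.2 z.1 - 1| := by
      have h1 : Measurable fun z : Θ × Ω => Zt z.2 z.1 := hZt.comp measurable_swap
      exact (((hZ.comp measurable_fst).div h1).sub measurable_const).abs
    have hprod : Integrable (fun z : Θ × Ω => |Z z.1 / Zt z.2 z.1 - 1|)
        ((post μ Φ Z).prod P) := by
      rw [integrable_prod_iff hF_meas.aestronglyMeasurable]
      refine ⟨Filter.Eventually.of_forall fun θ => hL1 θ, ?_⟩
      simpa [Real.norm_eq_abs, abs_abs] using hintθ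
    have hswap : Integrable (fun z : Ω × Θ => |Z z.2 / Zt z.1 z.2 - 1|)
        (P.prod (post μ Φ Z)) := hprod.swap
    have hg_int : Integrable (fun ω => ∫ θ, |Z θ / Zt ω θ - 1| ∂(post μ Φ Z)) P :=
      hswap.integral_prod_left
    have key : ∀ ω, tvDist (post μ Φ Z) (post μ Φ (Zt ω)) ≤
        2 * ∫ θ, |Z θ / Zt ω θ - 1| ∂(post μ Φ Z) := fun ω =>
      tv_det μ Φ Z (Zt ω) hΦ hZ (hZt.comp measurable_prodMk_left) hZpos (hZtpos ω)
        hint (hintt ω) hC (hCt ω)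
    calc ∫ ω, tvDist (post μ Φ Z) (post μ Φ (Zt ω)) ∂P
        ≤ ∫ ω, 2 * ∫ θ, |Z θ / Zt ω θ - 1| ∂(post μ Φ Z) ∂P :=
          integral_mono_of_nonneg
            (Filter.Eventually.of_forall fun ω => Real.iSup_nonneg fun f => abs_nonneg _)
            (hg_int.const_mul 2) (Filter.Eventually.of_forall key)
      _ = 2 * ∫ ω, ∫ θ, |Z θ / Zt ω θ - 1| ∂(post μ Φ Z) ∂P := integral_const_mul 2 _
      _ = 2 * ∫ θ, ∫ ω, |Z θ / Zt ω θ - 1| ∂P ∂(post μ Φ Z) := by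
          congr 1
          exact integral_integral_swap (f := fun ω θ => |Z θ / Zt ω θ - 1|) hswap
  · -- Part 2
    have h2 : ∀ θ, ∫ ω, |Z θ / Zt ω θ - 1| ∂P ≤
        Real.sqrt (∫ ω, (Zt ω θ / Z θ - 1) ^ 2 ∂P) *
          Real.sqrt (∫ ω, (Z θ / Zt ω θ) ^ 2 ∂P) := by
      intro θ
      set X : Ω → ℝ := fun ω => Zt ω θ / Z θ - 1 with hX_def
      set Y : Ω → ℝ := fun ω => Z θ / Zt ω θ with hY_def
      have hZtθ : Measurable fun ω => Zt ω θ := hZt.comp measurable_prodMk_right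
      have hXm : Measurable X := (hZtθ.div measurable_const).sub measurable_const
      have hYm : Measurable Y := measurable_const.div hZtθ
      have hYpos : ∀ ω, 0 < Y ω := fun ω => div_pos (hZpos θ) (hZtpos ω θ)
      have heq : ∀ ω, |Z θ / Zt ω θ - 1| = |X ω| * Y ω := fun ω => by
        have h0 : X ω * Y ω = -(Z θ / Zt ω θ - 1) := by
          have h1 : Z θ ≠ 0 := (hZpos θ).ne'
          have h2 : Zt ω θ ≠ 0 := (hZtpos ω θ).ne'
          simp only [hX_def, hY_def]
          rw [sub_mul, one_mul, div_mul_div_comm, mul_comm (Zt ω θ), div_self (mul_ne_zero h1 h2)]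
          ring
        rw [← abs_neg, ← h0, abs_mul, abs_of_pos (hYpos ω)]
      have hmemX : MemLp (fun ω => |X ω|) (ENNReal.ofReal 2) P := by
        rw [show ENNReal.ofReal 2 = 2 by norm_num]
        rw [memLp_two_iff_integrable_sq hXm.abs.aestronglyMeasurable]
        simpa [sq_abs] using hL2a θ
      have hmemY : MemLp Y (ENNReal.ofReal 2) P := by
        rw [show ENNReal.ofReal 2 = 2 by norm_num]
        exact (memLp_two_iff_integrable_sq hYm.aestronglyMeasurable).2 (hL2b θ)
      have hpq : Real.HolderConjugate 2 2 := Real.HolderConjugate.two_two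
      have hCS := integral_mul_le_Lp_mul_Lq_of_nonneg hpq
        (Filter.Eventually.of_forall fun ω => abs_nonneg (X ω))
        (Filter.Eventually.of_forall fun ω => (hYpos ω).le) hmemX hmemY
      have e1 : ∫ ω, |Z θ / Zt ω θ - 1| ∂P = ∫ ω, |X ω| * Y ω ∂P :=
        integral_congr_ae (Filter.Eventually.of_forall heq)
      have e2 : ∫ ω, |X ω| ^ (2:ℝ) ∂P = ∫ ω, X ω ^ 2 ∂P :=
        integral_congr_ae (Filter.Eventually.of_forall fun ω => by
          simp only [Real.rpow_two, sq_abs])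
      have e3 : ∫ ω, Y ω ^ (2:ℝ) ∂P = ∫ ω, Y ω ^ 2 ∂P :=
        integral_congr_ae (Filter.Eventually.of_forall fun ω => by
          simp only [Real.rpow_two])
      rw [e1]
      refine hCS.trans (le_of_eq ?_)
      rw [e2, e3]
      rw [← Real.sqrt_eq_rpow, ← Real.sqrt_eq_rpow]
    exact mul_le_mul_of_nonneg_left (integral_mono hintθ hintθ2 h2) (by norm_num)
end
end

section
/- In the multiple importance sampling setting for a Gibbs distribution on a finite set G, with S^{(i)}(θ) := Σ_{j=1}^J p_j exp(−h(X_{i,j},θ))/exp(−h(X_{i,j},θ_j)) and S(θ) := Z(θ) Σ_{j=1}^J p_j/Z(θ_j), the relative second moment of the error of a single sample satisfies E|S^{(1)}(θ)/S(θ) − 1|² ≤ (u(θ)²/S(θ)²) Σ_{j=1}^J p_j²/ℓ(θ_j)², assuming ℓ(θ) ≤ exp(−h(x,θ)) ≤ u(θ) for all (x,θ) ∈ G × Θ. -/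
open MeasureTheory Real

noncomputable section

theorem mis_relative_second_moment {Θ : Type*} {G : Type*} [Fintype G] [Nonempty G]
    [mG : MeasurableSpace G] [MeasurableSingletonClass G]
    {Ω : Type*} [MeasurableSpace Ω] (P : Measure Ω) [IsProbabilityMeasure P]
    (h : G → Θ → ℝ) (ℓ u : Θ → ℝ)
    (hbound : ∀ (x : G) (θ : Θ), ℓ θ ≤ Real.exp (-h x θ) ∧ Real.exp (-h x θ) ≤ u θ)
    (J : ℕ) (hJ : 1 ≤ J) (θs : Fin J → Θ) (p : Fin J → ℝ)
    (hp : ∀ j, 0 < p j ∧ p j < 1) (hpsum : ∑ j, p j = 1)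
    (X : Fin J → Ω → G) (hXmeas : ∀ j, Measurable (X j))
    (hXindep : ProbabilityTheory.iIndepFun X P)
    (hXdist : ∀ (j : Fin J) (x : G), P {ω | X j ω = x} =
      ENNReal.ofReal (Real.exp (-h x (θs j)) / ∑ y : G, Real.exp (-h y (θs j))))
    (θ : Θ)
    (hℓpos : ∀ j, 0 < ℓ (θs j)) :
    ∫ ω, ((∑ j, p j * (Real.exp (-h (X j ω) θ) / Real.exp (-h (X j ω) (θs j)))) /
          ((∑ x : G, Real.exp (-h x θ)) *
            ∑ j, p j / ∑ x : G, Real.exp (-h x (θs j))) - 1) ^ 2 ∂P ≤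
      u θ ^ 2 / ((∑ x : G, Real.exp (-h x θ)) *
          ∑ j, p j / ∑ x : G, Real.exp (-h x (θs j))) ^ 2 *
        ∑ j, p j ^ 2 / ℓ (θs j) ^ 2 := by
  classical
  have Zpos : ∀ τ : Θ, 0 < ∑ x : G, Real.exp (-h x τ) := fun τ =>
    Finset.sum_pos (fun x _ => Real.exp_pos _) Finset.univ_nonempty
  have hJne : (Finset.univ : Finset (Fin J)).Nonempty := ⟨⟨0, hJ⟩, Finset.mem_univ _⟩
  set Zθ : ℝ := ∑ x : G, Real.exp (-h x θ) with hZθ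
  set S : ℝ := Zθ * ∑ j, p j / ∑ x : G, Real.exp (-h x (θs j)) with hSdef
  have hSpos : 0 < S :=
    mul_pos (Zpos θ) (Finset.sum_pos (fun j _ => div_pos (hp j).1 (Zpos _)) hJne)
  have hupos : 0 < u θ := lt_of_lt_of_le (Real.exp_pos _) (hbound Classical.ofNonempty θ).2
  -- the random variables
  set f : Fin J → G → ℝ := fun j x => p j * (Real.exp (-h x θ) / Real.exp (-h x (θs j)))
    with hf
  set Y : Fin J → Ω → ℝ := fun j ω => f j (X j ω) with hY
  have hYmeas : ∀ j, Measurable (Y j) := fun j => (measurable_of_finite (f j)).comp (hXmeas j)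
  -- bounds on Y
  set C : Fin J → ℝ := fun j => p j * (u θ / ℓ (θs j)) with hC
  have hCpos : ∀ j, 0 < C j := fun j =>
    mul_pos (hp j).1 (div_pos hupos (hℓpos j))
  have hYnonneg : ∀ j ω, 0 ≤ Y j ω := fun j ω =>
    mul_nonneg (hp j).1.le (div_nonneg (Real.exp_pos _).le (Real.exp_pos _).le)
  have hYle : ∀ j ω, Y j ω ≤ C j := by
    intro j ω
    refine mul_le_mul_of_nonneg_left ?_ (hp j).1.le
    exact div_le_div₀ hupos.le (hbound _ θ).2 (hℓpos j) (hbound _ (θs j)).1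
  have hYmem : ∀ j, MemLp (Y j) 2 P := fun j =>
    memLp_of_bounded (Filter.Eventually.of_forall fun ω => ⟨hYnonneg j ω, hYle j ω⟩)
      (hYmeas j).aestronglyMeasurable 2
  -- law of Y j
  have hlaw : ∀ (j : Fin J) (g : G → ℝ), ∫ ω, g (X j ω) ∂P =
      ∑ x : G, (Real.exp (-h x (θs j)) / ∑ y : G, Real.exp (-h y (θs j))) * g x := by
    intro j g
    have hmap : IsProbabilityMeasure (P.map (X j)) :=
      Measure.isProbabilityMeasure_map (hXmeas j).aemeasurable
    rw [← integral_map (hXmeas j).aemeasurable (measurable_of_finite g).aestronglyMeasurable,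
      integral_fintype (Integrable.of_finite)]
    refine Finset.sum_congr rfl fun x _ => ?_
    have : (P.map (X j)) {x} = P {ω | X j ω = x} := by
      rw [Measure.map_apply (hXmeas j) (measurableSet_singleton x)]
      rfl
    rw [measureReal_def, this, hXdist j x, ENNReal.toReal_ofReal
      (div_nonneg (Real.exp_pos _).le (Zpos (θs j)).le), smul_eq_mul]
  -- expectation of Y j
  have hEY : ∀ j, ∫ ω, Y j ω ∂P = Zθ * (p j / ∑ x : G, Real.exp (-h x (θs j))) := by
    intro j
    rw [hlaw j (f j)]
    have : ∀ x : G, (Real.exp (-h x (θs j)) / ∑ y : G, Real.exp (-h y (θs j))) * f j x =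
        (p j / ∑ y : G, Real.exp (-h y (θs j))) * Real.exp (-h x θ) := by
      intro x
      have h1 : Real.exp (-h x (θs j)) ≠ 0 := (Real.exp_pos _).ne'
      have h2 : (∑ y : G, Real.exp (-h y (θs j))) ≠ 0 := (Zpos (θs j)).ne'
      field_simp [hf]
      simp only [hf]
      field_simp <;> ring
    rw [Finset.sum_congr rfl fun x _ => this x, ← Finset.mul_sum]
    rw [hZθ]; ring
  -- expectation of the sum
  have hET : ∫ ω, (∑ j, Y j) ω ∂P = S := by
    simp only [Finset.sum_apply]
    rw [integral_finset_sum _ fun j _ => (hYmem j).integrable one_le_two]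
    rw [hSdef, Finset.mul_sum]
    exact Finset.sum_congr rfl fun j _ => hEY j
  -- independence of the Y j
  have hYindep : ProbabilityTheory.iIndepFun Y P :=
    hXindep.comp f fun j => measurable_of_finite (f j)
  have hvar : ProbabilityTheory.variance (∑ j, Y j) P
      = ∑ j, ProbabilityTheory.variance (Y j) P :=
    ProbabilityTheory.IndepFun.variance_sum (fun j _ => hYmem j)
      (fun i _ j _ hij => hYindep.indepFun hij)
  -- bound each variance
  have hvarle : ∀ j, ProbabilityTheory.variance (Y j) P ≤ C j ^ 2 := by
    intro j
    refine le_trans (ProbabilityTheory.variance_le_expectation_sq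
      (hYmeas j).aestronglyMeasurable) ?_
    have hint : Integrable (fun ω => Y j ω ^ 2) P := (hYmem j).integrable_sq
    calc ∫ ω, (Y j ^ 2) ω ∂P = ∫ ω, Y j ω ^ 2 ∂P := by simp [Pi.pow_apply]
      _ ≤ ∫ _ω, C j ^ 2 ∂P := by
          refine integral_mono hint (integrable_const _) fun ω => ?_
          exact pow_le_pow_left₀ (hYnonneg j ω) (hYle j ω) 2
      _ = C j ^ 2 := by simp
  have hvarsum : ProbabilityTheory.variance (∑ j, Y j) P ≤ u θ ^ 2 * ∑ j, p j ^ 2 / ℓ (θs j) ^ 2 := by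
    rw [hvar, Finset.mul_sum]
    refine Finset.sum_le_sum fun j _ => le_trans (hvarle j) (le_of_eq ?_)
    have := (hℓpos j).ne'
    field_simp [hC]
    simp only [hC]
    field_simp <;> ring
  -- rewrite the LHS via variance
  have hTmem : MemLp (∑ j, Y j) 2 P := memLp_finset_sum' _ fun j _ => hYmem j
  have hvareq : ∫ ω, ((∑ j, Y j) ω - S) ^ 2 ∂P = ProbabilityTheory.variance (∑ j, Y j) P := by
    rw [ProbabilityTheory.variance_eq_integral hTmem.1.aemeasurable]
    simp only [Pi.pow_apply, Pi.sub_apply, hET]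
  have hLHS : ∫ ω, ((∑ j, Y j) ω / S - 1) ^ 2 ∂P
      = ProbabilityTheory.variance (∑ j, Y j) P / S ^ 2 := by
    have h1 : ∀ ω : Ω, ((∑ j, Y j) ω / S - 1) ^ 2 = ((∑ j, Y j) ω - S) ^ 2 * (S ^ 2)⁻¹ := by
      intro ω
      rw [div_sub_one hSpos.ne', div_pow, div_eq_mul_inv]
    simp_rw [h1]
    rw [integral_mul_const, hvareq, div_eq_mul_inv]
  have hgoal : ∫ ω, ((∑ j, Y j) ω / S - 1) ^ 2 ∂P ≤
      u θ ^ 2 / S ^ 2 * ∑ j, p j ^ 2 / ℓ (θs j) ^ 2 := by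
    rw [hLHS]
    rw [div_mul_eq_mul_div]
    exact div_le_div_of_nonneg_right hvarsum (by positivity) |>.trans_eq rfl
  have : ∀ ω : Ω, ((∑ j, p j * (Real.exp (-h (X j ω) θ) / Real.exp (-h (X j ω) (θs j)))) / S - 1) ^ 2
      = ((∑ j, Y j) ω / S - 1) ^ 2 := by
    intro ω; simp [hY, hf, Finset.sum_apply]
  simp_rw [this]
  exact hgoal
end
end
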